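/- Let X be a metrizable topological space having a dense subset D such that no family of subsets of ℕ of cardinality at most |D| is a splitting family (i.e., the density of X is strictly less than the splitting number 𝔰). Then every sequence (Kₙ)_{n∈ℕ} of subsets of X has a subsequence that converges in the sense of Kuratowski. -/

import Mathlib

open Set Topology TopologicalSpace

/-- Lower closed limit (Kuratowski) of the subsequence of `K` indexed by the
infinite set `A ⊆ ℕ`, with respect to the topology `t`: points all of whose
open neighborhoods meet `K n` for all but finitely many `n ∈ A`. -/
def kurLi {X : Type*} (t : TopologicalSpace X) (K : ℕ → Set X) (A : Set ℕ) : Set X :=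
  {x | ∀ U : Set X, IsOpen[t] U → x ∈ U → {n ∈ A | U ∩ K n = ∅}.Finite}

/-- Upper closed limit (Kuratowski): points all of whose open neighborhoods
meet `K n` for infinitely many `n ∈ A`. -/
def kurLs {X : Type*} (t : TopologicalSpace X) (K : ℕ → Set X) (A : Set ℕ) : Set X :=
  {x | ∀ U : Set X, IsOpen[t] U → x ∈ U → {n ∈ A | (U ∩ K n).Nonempty}.Infinite}

/-- A family of subsets of `ℕ` is splitting if every infinite `A ⊆ ℕ` is split
by some member of the family. -/
def IsSplittingFamily (S : Set (Set ℕ)) : Prop :=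
  ∀ A : Set ℕ, A.Infinite → ∃ s ∈ S, (A ∩ s).Infinite ∧ (A \ s).Infinite

universe u

/-!
Fix a base `𝓑` of `X` with `|𝓑| ≤ |D|` (weight equals density for metrizable spaces) and trace
each `B ∈ 𝓑` on the index set as `{n | B ∩ K n ≠ ∅}`. These at most `|D|` sets of naturals do not
form a splitting family, so some infinite `A` is almost contained in, or almost disjoint from,
each of them. For such `A`, a point of `Ls` whose basic neighbourhood `B` meets infinitely many
`K n` (`n ∈ A`) meets almost all of them, which puts the point in `Li`.
-/

section Kuratowski

variable {X : Type*} [t : TopologicalSpace X]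

def hittingIndices (K : ℕ → Set X) (U : Set X) : Set ℕ :=
  {n | (U ∩ K n).Nonempty}

theorem kurLi_subset_kurLs {K : ℕ → Set X} {A : Set ℕ} (hA : A.Infinite) :
    kurLi t K A ⊆ kurLs t K A := by
  intro x hx U hU hxU hfin
  refine hA ((hfin.union (hx U hU hxU)).subset fun n hn => ?_)
  rcases (U ∩ K n).eq_empty_or_nonempty with h | h
  exacts [Or.inr ⟨hn, h⟩, Or.inl ⟨hn, h⟩]

theorem kurLs_subset_kurLi_of_isTopologicalBasis {𝓑 : Set (Set X)} (h𝓑 : IsTopologicalBasis 𝓑)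
    {K : ℕ → Set X} {A : Set ℕ}
    (hA : ∀ B ∈ 𝓑, (A ∩ hittingIndices K B).Infinite → (A \ hittingIndices K B).Finite) :
    kurLs t K A ⊆ kurLi t K A := by
  intro x hx U hU hxU
  obtain ⟨B, hB𝓑, hxB, hBU⟩ := h𝓑.exists_subset_of_mem_open hxU hU
  refine (hA B hB𝓑 (hx B (h𝓑.isOpen hB𝓑) hxB)).subset ?_
  rintro n ⟨hnA, hUK⟩
  refine ⟨hnA, fun ⟨y, hyB, hyK⟩ => ?_⟩
  exact hUK.subset ⟨hBU hyB, hyK⟩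

theorem kurLi_eq_kurLs_of_isTopologicalBasis {𝓑 : Set (Set X)} (h𝓑 : IsTopologicalBasis 𝓑)
    {K : ℕ → Set X} {A : Set ℕ} (hAinf : A.Infinite)
    (hA : ∀ B ∈ 𝓑, (A ∩ hittingIndices K B).Infinite → (A \ hittingIndices K B).Finite) :
    kurLi t K A = kurLs t K A :=
  (kurLi_subset_kurLs hAinf).antisymm (kurLs_subset_kurLi_of_isTopologicalBasis h𝓑 hA)

end Kuratowski

theorem Dense.isTopologicalBasis_range_ball {X : Type*} [PseudoMetricSpace X] {D : Set X}
    (hD : Dense D) :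
    IsTopologicalBasis (range fun p : D × ℕ => Metric.ball (p.1 : X) (1 / (p.2 + 1))) := by
  refine isTopologicalBasis_of_isOpen_of_nhds (by rintro _ ⟨p, rfl⟩; exact Metric.isOpen_ball) ?_
  intro x U hxU hU
  obtain ⟨ε, hε, hεU⟩ := Metric.isOpen_iff.mp hU x hxU
  obtain ⟨k, hk⟩ := exists_nat_one_div_lt (half_pos hε)
  obtain ⟨d, hdD, hxd⟩ := hD.exists_dist_lt x (Nat.one_div_pos_of_nat (n := k))
  refine ⟨_, ⟨(⟨d, hdD⟩, k), rfl⟩, Metric.mem_ball.mpr hxd, ?_⟩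
  refine (Metric.ball_subset_ball' ?_).trans hεU
  rw [dist_comm]
  linarith

theorem Dense.exists_isTopologicalBasis_mk_le {X : Type*} [TopologicalSpace X]
    [MetrizableSpace X] {D : Set X} (hD : Dense D) :
    ∃ 𝓑 : Set (Set X), IsTopologicalBasis 𝓑 ∧ Cardinal.mk 𝓑 ≤ Cardinal.mk D := by
  let := metrizableSpaceMetric X
  rcases D.finite_or_infinite with hfin | hinf
  · have hDuniv : D = univ := by simpa [hfin.isClosed.closure_eq] using hD.closure_eq
    -- a finite T₁ space is discrete, so its singletons form a base
    have : Finite X := finite_univ_iff.mp (hDuniv ▸ hfin)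
    have hsingletons : {s : Set X | ∃ x, s = {x}} = range singleton := by
      ext s; simp [eq_comm]
    refine ⟨_, isTopologicalBasis_singletons X, ?_⟩
    rw [hsingletons, hDuniv, Cardinal.mk_univ]
    exact Cardinal.mk_range_le
  · refine ⟨_, hD.isTopologicalBasis_range_ball, Cardinal.mk_range_le.trans_eq ?_⟩
    have := hinf.to_subtype
    simp [Cardinal.mk_prod, Cardinal.mul_aleph0_eq (Cardinal.aleph0_le_mk D)]

/-- A metrizable space of density less than the splitting number has the
generalized Bolzano–Weierstrass property. -/
theorem stmt4 {X : Type u} [t : TopologicalSpace X] [MetrizableSpace X]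
    (D : Set X) (hD : Dense D)
    (hsmall : ∀ S : Set (Set ℕ),
      Cardinal.lift.{u} (Cardinal.mk S) ≤ Cardinal.mk D → ¬ IsSplittingFamily S)
    (K : ℕ → Set X) :
    ∃ A : Set ℕ, A.Infinite ∧ kurLi t K A = kurLs t K A := by
  obtain ⟨𝓑, h𝓑, h𝓑D⟩ := hD.exists_isTopologicalBasis_mk_le
  have hcard : Cardinal.lift.{u} (Cardinal.mk (hittingIndices K '' 𝓑)) ≤ Cardinal.mk D :=
    calc Cardinal.lift.{u} (Cardinal.mk (hittingIndices K '' 𝓑))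
        _ ≤ Cardinal.lift.{0} (Cardinal.mk 𝓑) := Cardinal.mk_image_le_lift
        _ = Cardinal.mk 𝓑 := Cardinal.lift_uzero _
        _ ≤ Cardinal.mk D := h𝓑D
  have hunsplit := hsmall _ hcard
  simp only [IsSplittingFamily, not_forall, not_exists, not_and, forall_mem_image,
    Set.not_infinite, exists_prop] at hunsplit
  obtain ⟨A, hAinf, hA⟩ := hunsplit
  exact ⟨A, hAinf, kurLi_eq_kurLs_of_isTopologicalBasis h𝓑 hAinf hA⟩
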